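/- Let ρ_d > 0, b > 0, let b* > 0 be the conjugate of b (b* = b if b = ρ_d, else b* ≠ b with b*·e^{−b*/ρ_d} = b·e^{−b/ρ_d}), and let Ã > 0, Ω̃₀ > 0, α' ≤ 0, ω' ≤ 0 be real constants (the steady-state values and derivatives of the transition rates). Let λ be a real number with λ ≠ 0, λ ≠ b − b*, and λ ≠ α'·Ω̃₀·ρ_d/b* − Ω̃₀·ρ_d/Ã. Then λ is an eigenvalue of the linearized system at the nonzero steady state — i.e., there exist a C¹ function δΩ : [0,1] → ℝ with ∫₀¹ δΩ(x) dx = 1 and a real δA such that λ·δΩ(x) + ρ_d·δΩ'(x) = (b − b*)·δΩ(x) − α'·δA·Ω̃₀·e^{(b−b*)x/ρ_d}, λ·δA = b*·∫₀¹ δΩ dx + α'·δA·Ω̃₀·ρ_d/b* − (Ω̃₀·ρ_d/Ã)·δA − ω'·Ã·∫₀¹ δΩ dx, and δΩ(0) = (Ω̃₀/Ã)·δA + (ω'·Ã/ρ_d)·∫₀¹ δΩ dx — if and only if f(λ) = 1, where f(λ) = [ρ_d/(b − b* − λ)]·[(b/b*)·e^{−λ/ρ_d} − 1]·[ω'Ã/ρ_d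 + (Ω̃₀/Ã)·(b* − ω'Ã)/(λ − α'Ω̃₀ρ_d/b* + Ω̃₀ρ_d/Ã)] − [α'Ω̃₀ρ_d/(b*·λ)]·[(b·(1 − e^{−λ/ρ_d}) − λ)/(b − b* − λ)]·[(b* − ω'Ã)/(λ − α'Ω̃₀ρ_d/b* + Ω̃₀ρ_d/Ã)]. -/

import Mathlib

/-!
Normalize the eigenvector by `∫₀¹ δΩ = 1`. The equation for `δA` then becomes linear and forces
`δA = (b* - ω'Ã) / D` with `D = λ - α'Ω̃₀ρ/b* + Ω̃₀ρ/Ã ≠ 0`. The equation for `δΩ` is a linear ODE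
with exponential forcing, so `δΩ` is determined by `δΩ(0)`, which the boundary condition fixes;
hence the eigenvector is unique, and what remains of the system is the normalization itself.
Integrating the explicit solution turns `∫₀¹ δΩ = 1` into `f(λ) = 1`, the conjugacy
`b* e^{-b*/ρ} = b e^{-b/ρ}` being what evaluates `∫₀¹ e^{(b-b*)x/ρ} dx` to `ρ/b*`.
-/

open Real Set intervalIntegral

theorem integral_exp_mul_div {r ρ : ℝ} (hr : r ≠ 0) (hρ : ρ ≠ 0) :
    ∫ x in (0 : ℝ)..1, exp (r * x / ρ) = ρ * (exp (r / ρ) - 1) / r := by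
  simp_rw [mul_div_right_comm r]
  rw [integral_comp_mul_left (fun x => exp x) (div_ne_zero hr hρ), integral_exp]
  simp only [smul_eq_mul, mul_zero, mul_one, exp_zero]
  field_simp

theorem exp_sub_div_eq_div_of_mul_exp_eq {ρ b bstar : ℝ} (hbs : bstar ≠ 0)
    (h : bstar * exp (-bstar / ρ) = b * exp (-b / ρ)) : exp ((b - bstar) / ρ) = b / bstar := by
  have hsplit : exp (-bstar / ρ) = exp ((b - bstar) / ρ) * exp (-b / ρ) := by
    rw [← exp_add]; ring_nf
  rw [eq_div_iff hbs]
  refine mul_right_cancel₀ (exp_ne_zero (-b / ρ)) ?_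
  linear_combination h - bstar * hsplit

theorem integral_exp_sub_mul_div_of_mul_exp_eq {ρ b bstar : ℝ} (hρ : ρ ≠ 0) (hbs : bstar ≠ 0)
    (h : bstar * exp (-bstar / ρ) = b * exp (-b / ρ)) (hdeg : bstar = b → b = ρ) :
    ∫ x in (0 : ℝ)..1, exp ((b - bstar) * x / ρ) = ρ / bstar := by
  rcases eq_or_ne bstar b with rfl | hne
  · simp [hdeg rfl, div_self hρ]
  · rw [integral_exp_mul_div (sub_ne_zero.2 hne.symm) hρ, exp_sub_div_eq_div_of_mul_exp_eq hbs h]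
    field_simp

theorem eq_exp_mul_of_hasDerivWithinAt {E : Type*} [NormedAddCommGroup E] [NormedSpace ℝ E]
    {u : ℝ → E} {μ a b : ℝ}
    (hu : ∀ x ∈ Icc a b, HasDerivWithinAt u (μ • u x) (Icc a b) x) :
    ∀ x ∈ Icc a b, u x = exp (μ * (x - a)) • u a := by
  have hg : ∀ x ∈ Icc a b,
      HasDerivWithinAt (fun x => exp (-μ * (x - a)) • u x) 0 (Icc a b) x := by
    intro x hx
    have he : HasDerivAt (fun y => exp (-μ * (y - a))) (exp (-μ * (x - a)) * (-μ * 1)) x :=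
      (((hasDerivAt_id x).sub_const a).const_mul (-μ)).exp
    have hcancel : exp (-μ * (x - a)) * μ + exp (-μ * (x - a)) * (-μ * 1) = 0 := by ring
    refine (he.hasDerivWithinAt.smul (hu x hx)).congr_deriv ?_
    rw [smul_smul, ← add_smul, hcancel, zero_smul]
  intro x hx
  have hconst := constant_of_derivWithin_zero (fun y hy => (hg y hy).differentiableWithinAt)
    (fun y hy => (hg y (Ico_subset_Icc_self hy)).derivWithin
      (uniqueDiffOn_Icc (hy.1.trans_lt hy.2) y (Ico_subset_Icc_self hy))) x hx
  simp only [sub_self, mul_zero, exp_zero, one_smul] at hconst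
  rw [← hconst, smul_smul, ← exp_add, neg_mul, add_neg_cancel, exp_zero, one_smul]

/-- The solution of `λ y + ρ y' = β y - c e^{βx/ρ}`, `y 0 = y₀`; for an eigenvector, `y = δΩ`,
`β = b - b*` and `c = α' δA Ω̃₀`. -/
noncomputable def eigenProfile (ρ β lam c y₀ x : ℝ) : ℝ :=
  (y₀ + c / lam) * exp ((β - lam) * x / ρ) - c / lam * exp (β * x / ρ)

section eigenProfile

variable {ρ β lam c y₀ : ℝ}

@[simp]
theorem eigenProfile_zero : eigenProfile ρ β lam c y₀ 0 = y₀ := by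
  simp [eigenProfile]

theorem hasDerivAt_eigenProfile (hρ : ρ ≠ 0) (hlam : lam ≠ 0) (x : ℝ) :
    HasDerivAt (eigenProfile ρ β lam c y₀)
      ((β - lam) / ρ * eigenProfile ρ β lam c y₀ x - c / ρ * exp (β * x / ρ)) x := by
  have hexp (r : ℝ) : HasDerivAt (fun y => exp (r * y / ρ)) (exp (r * x / ρ) * (r * 1 / ρ)) x :=
    (((hasDerivAt_id x).const_mul r).div_const ρ).exp
  refine (((hexp (β - lam)).const_mul _).sub ((hexp β).const_mul _)).congr_deriv ?_
  simp only [eigenProfile]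
  field_simp
  ring

theorem continuous_eigenProfile (hρ : ρ ≠ 0) (hlam : lam ≠ 0) :
    Continuous (eigenProfile ρ β lam c y₀) :=
  continuous_iff_continuousAt.2 fun x => (hasDerivAt_eigenProfile hρ hlam x).continuousAt

theorem eq_eigenProfile_of_hasDerivWithinAt (hρ : ρ ≠ 0) (hlam : lam ≠ 0) {T : ℝ} {y y' : ℝ → ℝ}
    (hy : ∀ x ∈ Icc 0 T, HasDerivWithinAt y (y' x) (Icc 0 T) x)
    (hode : ∀ x ∈ Icc 0 T, lam * y x + ρ * y' x = β * y x - c * exp (β * x / ρ)) :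
    ∀ x ∈ Icc 0 T, y x = eigenProfile ρ β lam c (y 0) x := by
  have hu : ∀ x ∈ Icc 0 T, HasDerivWithinAt (fun x => y x - eigenProfile ρ β lam c (y 0) x)
      ((β - lam) / ρ * (y x - eigenProfile ρ β lam c (y 0) x)) (Icc 0 T) x := by
    intro x hx
    refine ((hy x hx).sub (hasDerivAt_eigenProfile hρ hlam x).hasDerivWithinAt).congr_deriv ?_
    field_simp
    linear_combination hode x hx
  intro x hx
  simpa [sub_eq_zero] using eq_exp_mul_of_hasDerivWithinAt hu x hx

theorem integral_eigenProfile (hρ : ρ ≠ 0) (hβ : β ≠ lam) :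
    ∫ x in (0 : ℝ)..1, eigenProfile ρ β lam c y₀ x =
      (y₀ + c / lam) * (ρ * (exp ((β - lam) / ρ) - 1) / (β - lam)) -
        c / lam * ∫ x in (0 : ℝ)..1, exp (β * x / ρ) := by
  have hint (r : ℝ) : IntervalIntegrable (fun x => exp (r * x / ρ)) MeasureTheory.volume 0 1 :=
    (by fun_prop : Continuous fun x => exp (r * x / ρ)).intervalIntegrable 0 1
  simp only [eigenProfile]
  rw [integral_sub ((hint _).const_mul _) ((hint _).const_mul _), integral_const_mul,
    integral_const_mul, integral_exp_mul_div (sub_ne_zero.2 hβ) hρ]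

end eigenProfile

theorem conjugate_spec {ρ b bstar : ℝ} (hρ : 0 < ρ) (h₁ : b = ρ → bstar = b)
    (h₂ : b ≠ ρ → 0 < bstar ∧ bstar ≠ b ∧ bstar * exp (-bstar / ρ) = b * exp (-b / ρ)) :
    bstar ≠ 0 ∧ bstar * exp (-bstar / ρ) = b * exp (-b / ρ) ∧ (bstar = b → b = ρ) := by
  rcases eq_or_ne b ρ with rfl | hbρ
  · obtain rfl := h₁ rfl
    exact ⟨hρ.ne', rfl, fun _ => rfl⟩
  · obtain ⟨hpos, hne, hconj⟩ := h₂ hbρ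
    exact ⟨hpos.ne', hconj, fun h => absurd h hne⟩

/-- The paper's characteristic function `f(λ)`. -/
noncomputable def charFun (ρ b bstar At Om0 ap wp lam : ℝ) : ℝ :=
  (ρ / (b - bstar - lam)) * ((b / bstar) * exp (-lam / ρ) - 1) *
      (wp * At / ρ +
        (Om0 / At) * (bstar - wp * At) /
          (lam - ap * Om0 * ρ / bstar + Om0 * ρ / At)) -
    (ap * Om0 * ρ / (bstar * lam)) *
      ((b * (1 - exp (-lam / ρ)) - lam) / (b - bstar - lam)) *
      ((bstar - wp * At) /
        (lam - ap * Om0 * ρ / bstar + Om0 * ρ / At))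

theorem charFun_eq_integral_eigenProfile {ρ b bstar At Om0 ap wp lam : ℝ} (hρ : ρ ≠ 0)
    (hbs : bstar ≠ 0) (hexp : exp ((b - bstar) / ρ) = b / bstar)
    (hint : ∫ x in (0 : ℝ)..1, exp ((b - bstar) * x / ρ) = ρ / bstar)
    (hlam0 : lam ≠ 0) (hlam1 : lam ≠ b - bstar)
    {δA : ℝ} (hδA : δA = (bstar - wp * At) / (lam - ap * Om0 * ρ / bstar + Om0 * ρ / At)) :
    charFun ρ b bstar At Om0 ap wp lam =
      ∫ x in (0 : ℝ)..1,
        eigenProfile ρ (b - bstar) lam (ap * δA * Om0) (Om0 / At * δA + wp * At / ρ) x := by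
  have hμ : b - bstar - lam ≠ 0 := sub_ne_zero.2 hlam1.symm
  have hexpμ : exp ((b - bstar - lam) / ρ) = b / bstar * exp (-lam / ρ) := by
    rw [sub_div, sub_eq_add_neg, exp_add, hexp, neg_div]
  rw [integral_eigenProfile hρ hlam1.symm, hint, hexpμ, charFun, mul_div_assoc (Om0 / At), ← hδA]
  field_simp
  ring

theorem stmt16_general (ρ b : ℝ) (hρ : 0 < ρ)
    (bstar : ℝ)
    (hbstar₁ : b = ρ → bstar = b)
    (hbstar₂ : b ≠ ρ → 0 < bstar ∧ bstar ≠ b ∧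
      bstar * Real.exp (-bstar / ρ) = b * Real.exp (-b / ρ))
    (At Om0 : ℝ)
    (ap wp : ℝ)
    (lam : ℝ) (hlam0 : lam ≠ 0) (hlam1 : lam ≠ b - bstar)
    (hlam2 : lam ≠ ap * Om0 * ρ / bstar - Om0 * ρ / At) :
    (∃ (δΩ δΩd : ℝ → ℝ) (δA : ℝ),
        (∀ x ∈ Set.Icc (0 : ℝ) 1, HasDerivWithinAt δΩ (δΩd x) (Set.Icc 0 1) x) ∧
        ContinuousOn δΩd (Set.Icc 0 1) ∧
        (∫ x in (0 : ℝ)..1, δΩ x) = 1 ∧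
        (∀ x ∈ Set.Icc (0 : ℝ) 1,
          lam * δΩ x + ρ * δΩd x =
            (b - bstar) * δΩ x -
              ap * δA * Om0 * Real.exp ((b - bstar) * x / ρ)) ∧
        (lam * δA = bstar * (∫ x in (0 : ℝ)..1, δΩ x) +
            ap * δA * Om0 * ρ / bstar - Om0 * ρ / At * δA -
            wp * At * (∫ x in (0 : ℝ)..1, δΩ x)) ∧
        (δΩ 0 = Om0 / At * δA +
            wp * At / ρ * (∫ x in (0 : ℝ)..1, δΩ x))) ↔
      ((ρ / (b - bstar - lam)) * ((b / bstar) * Real.exp (-lam / ρ) - 1) *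
          (wp * At / ρ +
            (Om0 / At) * (bstar - wp * At) /
              (lam - ap * Om0 * ρ / bstar + Om0 * ρ / At)) -
        (ap * Om0 * ρ / (bstar * lam)) *
          ((b * (1 - Real.exp (-lam / ρ)) - lam) / (b - bstar - lam)) *
          ((bstar - wp * At) /
            (lam - ap * Om0 * ρ / bstar + Om0 * ρ / At)) = 1) := by
  obtain ⟨hbs, hconj, hdeg⟩ := conjugate_spec hρ hbstar₁ hbstar₂
  change _ ↔ charFun ρ b bstar At Om0 ap wp lam = 1
  have hD : lam - ap * Om0 * ρ / bstar + Om0 * ρ / At ≠ 0 := fun h => hlam2 (by linarith)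
  set δA := (bstar - wp * At) / (lam - ap * Om0 * ρ / bstar + Om0 * ρ / At) with hδA
  have hδA_iff (a : ℝ) : lam * a = bstar * 1 + ap * a * Om0 * ρ / bstar - Om0 * ρ / At * a -
      wp * At * 1 ↔ a = δA := by
    rw [hδA, eq_div_iff hD]
    constructor <;> intro h <;> linear_combination h
  rw [charFun_eq_integral_eigenProfile hρ.ne' hbs (exp_sub_div_eq_div_of_mul_exp_eq hbs hconj)
    (integral_exp_sub_mul_div_of_mul_exp_eq hρ.ne' hbs hconj hdeg) hlam0 hlam1 hδA]
  constructor
  · rintro ⟨y, y', a, hy, -, hint, hode, hA, hy0⟩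
    rw [hint] at hA hy0
    obtain rfl := (hδA_iff a).1 hA
    have hy_eq := eq_eigenProfile_of_hasDerivWithinAt hρ.ne' hlam0 hy hode
    rw [hy0, mul_one] at hy_eq
    refine (intervalIntegral.integral_congr fun x hx => ?_).trans hint
    exact (hy_eq x (by rwa [uIcc_of_le zero_le_one] at hx)).symm
  · intro h
    set c := ap * δA * Om0
    set y₀ := Om0 / At * δA + wp * At / ρ
    refine ⟨eigenProfile ρ (b - bstar) lam c y₀,
      fun x => (b - bstar - lam) / ρ * eigenProfile ρ (b - bstar) lam c y₀ x -
        c / ρ * exp ((b - bstar) * x / ρ), δA,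
      fun x _ => (hasDerivAt_eigenProfile hρ.ne' hlam0 x).hasDerivWithinAt, ?_, h, fun x _ => ?_,
      by rw [h, hδA_iff], by rw [eigenProfile_zero, h, mul_one]⟩
    · exact ((continuous_eigenProfile hρ.ne' hlam0).const_mul _ |>.sub (by fun_prop)).continuousOn
    · field_simp
      ring

/-- characteristic equation for the linearization of the Approximation 4
system around its nonzero steady state.  With `ρ > 0`, `b > 0`, conjugate value `b*`,
steady-state values `Ã > 0`, `Ω̃₀ > 0`, derivatives `α' ≤ 0`, `ω' ≤ 0` of the
transition rates, and `λ ∈ ℝ` avoiding the exceptional values `0`, `b − b*`,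
`α'Ω̃₀ρ/b* − Ω̃₀ρ/Ã`, the value `λ` is an eigenvalue of the linearized system (i.e.
there is a normalized C¹ eigenvector `(δΩ, δA)`) iff `f(λ) = 1`. -/
theorem stmt16 (ρ b : ℝ) (hρ : 0 < ρ) (hb : 0 < b)
    (bstar : ℝ)
    (hbstar₁ : b = ρ → bstar = b)
    (hbstar₂ : b ≠ ρ → 0 < bstar ∧ bstar ≠ b ∧
      bstar * Real.exp (-bstar / ρ) = b * Real.exp (-b / ρ))
    (At Om0 : ℝ) (hAt : 0 < At) (hOm0 : 0 < Om0)
    (ap wp : ℝ) (hap : ap ≤ 0) (hwp : wp ≤ 0)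
    (lam : ℝ) (hlam0 : lam ≠ 0) (hlam1 : lam ≠ b - bstar)
    (hlam2 : lam ≠ ap * Om0 * ρ / bstar - Om0 * ρ / At) :
    (∃ (δΩ δΩd : ℝ → ℝ) (δA : ℝ),
        (∀ x ∈ Set.Icc (0 : ℝ) 1, HasDerivWithinAt δΩ (δΩd x) (Set.Icc 0 1) x) ∧
        ContinuousOn δΩd (Set.Icc 0 1) ∧
        (∫ x in (0 : ℝ)..1, δΩ x) = 1 ∧
        (∀ x ∈ Set.Icc (0 : ℝ) 1,
          lam * δΩ x + ρ * δΩd x =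
            (b - bstar) * δΩ x -
              ap * δA * Om0 * Real.exp ((b - bstar) * x / ρ)) ∧
        (lam * δA = bstar * (∫ x in (0 : ℝ)..1, δΩ x) +
            ap * δA * Om0 * ρ / bstar - Om0 * ρ / At * δA -
            wp * At * (∫ x in (0 : ℝ)..1, δΩ x)) ∧
        (δΩ 0 = Om0 / At * δA +
            wp * At / ρ * (∫ x in (0 : ℝ)..1, δΩ x))) ↔
      ((ρ / (b - bstar - lam)) * ((b / bstar) * Real.exp (-lam / ρ) - 1) *
          (wp * At / ρ +
            (Om0 / At) * (bstar - wp * At) /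
              (lam - ap * Om0 * ρ / bstar + Om0 * ρ / At)) -
        (ap * Om0 * ρ / (bstar * lam)) *
          ((b * (1 - Real.exp (-lam / ρ)) - lam) / (b - bstar - lam)) *
          ((bstar - wp * At) /
            (lam - ap * Om0 * ρ / bstar + Om0 * ρ / At)) = 1) :=
  stmt16_general ρ b hρ bstar hbstar₁ hbstar₂ At Om0 ap wp lam hlam0 hlam1 hlam2
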